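/- Let d ≥ 1 and k ≥ 2d be integers. Let H_d be the subgroup of ℤ^{1+k} generated by the 2d vectors e_1 − e_2, e_2 − e_3, …, e_{2d−1} − e_{2d} and h − e_1 − e_2 − ⋯ − e_d, equipped with the restriction Q_d of the form Q. Then for every integer m ≥ 1 there is no injective ℤ-linear map j : H_d → ℤ^m satisfying B_m(j(x), j(y)) = Q_d(x, y) for all x, y ∈ H_d. -/

import Mathlib

/-- The standard negative definite symmetric bilinear form on `ℤ^m`. -/
def B (m : ℕ) (x y : Fin m → ℤ) : ℤ := -∑ i, x i * y i

/-- On `ℤ^{1+k}` with coordinates indexed by `Fin (k+1)`, coordinate `0` is `h` and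
coordinate `i` (for `1 ≤ i ≤ k`) is `e_i`.  `Q` is the symmetric bilinear form of
signature `(1,k)`: `Q(x,y) = x₀y₀ - ∑_{i=1}^k xᵢyᵢ`. -/
def Qform (k : ℕ) (x y : Fin (k+1) → ℤ) : ℤ :=
  2 * (x 0 * y 0) - ∑ i, x i * y i

/-- The basis vector of `ℤ^{1+k}` with a `1` in coordinate `i`; `basisVec k 0 = h`
and `basisVec k i = e_i` for `1 ≤ i ≤ k`. -/
def basisVec (k : ℕ) (i : ℕ) : Fin (k+1) → ℤ := fun j => if (j : ℕ) = i then 1 else 0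

/-- The `2d` generators of `H_d`: `e_1 - e_2, …, e_{2d-1} - e_{2d}` and
`h - e_1 - ⋯ - e_d`. -/
def gen (d k : ℕ) : Fin (2*d) → (Fin (k+1) → ℤ) := fun j =>
  if (j : ℕ) < 2*d - 1 then basisVec k ((j : ℕ) + 1) - basisVec k ((j : ℕ) + 2)
  else basisVec k 0 - ∑ i ∈ Finset.Icc 1 d, basisVec k i

/-!
For `d ≤ 2`, the vector `2h - e_1 - ⋯ - e_{2d} = 2(h - e_1 - ⋯ - e_d) + ∑_{i ≤ d} (e_i - e_{i+d})`
lies in `H_d` and has square `4 - 2d ≥ 0`, impossible for a nonzero vector mapped into a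
negative definite lattice.

For `d ≥ 3`, the images `u_i` of `e_i - e_{i+1}` are norm-2 vectors of `ℤ^m` with the Gram matrix
of the root system `A_{2d-1}`. Such a chain of length at least `4` is always standard:
`u_i = z_i - z_{i+1}` for orthonormal `z_0, …, z_{2d-1}`. The `z_i` are built one at a time, and
Bessel's inequality leaves no other choice, up to the exceptional embedding of `A_3 = D_3` that
the next vector of the chain rules out. The image `w` of `h - e_1 - ⋯ - e_d` then pairs to some
`a` with the `z_i`, `i < d`, and to `a + 1` with the others, so that Bessel's inequality gives
`d (a² + (a + 1)²) ≤ w ⬝ w = d - 1`, a contradiction.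
-/

open Finset

theorem sum_Icc_one_two_mul {M : Type*} [AddCommMonoid M] (g : ℕ → M) (d : ℕ) :
    ∑ i ∈ Icc 1 (2 * d), g i = ∑ i ∈ Icc 1 d, (g i + g (i + d)) := by
  rw [sum_add_distrib, ← Ico_add_one_right_eq_Icc, ← Ico_add_one_right_eq_Icc,
    ← sum_Ico_consecutive _ (by omega : 1 ≤ d + 1) (by omega : d + 1 ≤ 2 * d + 1), sum_Ico_add',
    show 1 + d = d + 1 by omega, show d + 1 + d = 2 * d + 1 by omega]

section Bessel

variable {R ι κ : Type*} [CommRing R] [Fintype ι] [DecidableEq κ]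

theorem dotProduct_sum_smul_of_orthonormal {s : Finset κ} {z : κ → ι → R}
    (hz : ∀ i ∈ s, ∀ j ∈ s, z i ⬝ᵥ z j = if i = j then 1 else 0) (c : κ → R) {i : κ}
    (hi : i ∈ s) : z i ⬝ᵥ ∑ j ∈ s, c j • z j = c i := by
  rw [dotProduct_sum, Finset.sum_eq_single_of_mem i hi]
  · simp [hz i hi i hi]
  · intro j hj hji
    simp [hz i hi j hj, Ne.symm hji]

theorem sum_sq_dotProduct_le [LinearOrder R] [IsStrictOrderedRing R] {s : Finset κ}
    {z : κ → ι → R} (hz : ∀ i ∈ s, ∀ j ∈ s, z i ⬝ᵥ z j = if i = j then 1 else 0)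
    (w : ι → R) : ∑ i ∈ s, (z i ⬝ᵥ w) ^ 2 ≤ w ⬝ᵥ w := by
  set P := ∑ i ∈ s, (z i ⬝ᵥ w) • z i
  have hPP : P ⬝ᵥ P = ∑ i ∈ s, (z i ⬝ᵥ w) ^ 2 := by
    refine (sum_dotProduct _ _ _).trans (sum_congr rfl fun i hi => ?_)
    rw [smul_dotProduct, dotProduct_sum_smul_of_orthonormal hz _ hi, smul_eq_mul, sq]
  have hPw : P ⬝ᵥ w = ∑ i ∈ s, (z i ⬝ᵥ w) ^ 2 := by
    simp only [P, sum_dotProduct, smul_dotProduct, smul_eq_mul, sq]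
  have hres : 0 ≤ (w - P) ⬝ᵥ (w - P) := Finset.sum_nonneg fun i _ => mul_self_nonneg _
  rw [sub_dotProduct, dotProduct_sub, dotProduct_sub, hPP, dotProduct_comm w P, hPw] at hres
  linarith

end Bessel

section IntegerLattice

variable {ι : Type*} [Fintype ι]

theorem exists_sub_of_dotProduct_self_eq_two {u : ι → ℤ} (hu : u ⬝ᵥ u = 2) :
    ∃ z₀ z₁ : ι → ℤ, z₀ ⬝ᵥ z₀ = 1 ∧ z₁ ⬝ᵥ z₁ = 1 ∧ z₀ ⬝ᵥ z₁ = 0 ∧ u = z₀ - z₁ := by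
  classical
  obtain ⟨a, ha⟩ : ∃ a, u a ≠ 0 := by
    by_contra! h
    simp [show u = 0 from funext h] at hu
  have hle : u a * u a ≤ 2 :=
    hu ▸ single_le_sum (f := fun i => u i * u i) (fun i _ => mul_self_nonneg _) (mem_univ a)
  have hsq : u a * u a = 1 := by
    have : -1 ≤ u a ∧ u a ≤ 1 := ⟨by nlinarith, by nlinarith⟩
    rcases (by omega : u a = 1 ∨ u a = -1) with h | h <;> simp [h]
  set z₀ : ι → ℤ := Pi.single a (u a)
  have h00 : z₀ ⬝ᵥ z₀ = 1 := by simp [z₀, hsq]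
  have h0u : z₀ ⬝ᵥ u = 1 := by rw [single_dotProduct, hsq]
  refine ⟨z₀, z₀ - u, h00, ?_, ?_, (sub_sub_cancel z₀ u).symm⟩
  · simp only [sub_dotProduct, dotProduct_sub, h00, h0u, dotProduct_comm u z₀, hu]
    norm_num
  · rw [dotProduct_sub, h00, h0u, sub_self]

structure IsAChain (n : ℕ) (u : ℕ → ι → ℤ) : Prop where
  dot_self : ∀ i < n, u i ⬝ᵥ u i = 2
  dot_succ : ∀ i, i + 1 < n → u i ⬝ᵥ u (i + 1) = -1
  dot_of_add_two_le : ∀ i j, i + 2 ≤ j → j < n → u i ⬝ᵥ u j = 0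

structure IsStdRep (u : ℕ → ι → ℤ) (t : ℕ) (z : ℕ → ι → ℤ) : Prop where
  orthonormal : ∀ i ≤ t, ∀ j ≤ t, z i ⬝ᵥ z j = if i = j then 1 else 0
  eq_sub : ∀ i < t, u i = z i - z (i + 1)

namespace IsStdRep

variable {u z : ℕ → ι → ℤ} {t : ℕ}

theorem dotProduct_succ (hz : IsStdRep u t z) {i : ℕ} (hi : i < t) (w : ι → ℤ) :
    z (i + 1) ⬝ᵥ w = z i ⬝ᵥ w - u i ⬝ᵥ w := by
  rw [hz.eq_sub i hi, sub_dotProduct]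
  ring

theorem dotProduct_eq_of_forall (hz : IsStdRep u t z) {w : ι → ℤ} {p q : ℕ} (hq : q ≤ t)
    (h : ∀ i, p ≤ i → i < q → u i ⬝ᵥ w = 0) : ∀ i, p ≤ i → i ≤ q → z i ⬝ᵥ w = z p ⬝ᵥ w := by
  intro i hpi
  induction i, hpi using Nat.le_induction with
  | base => intro _; rfl
  | succ i hpi ih =>
    intro hi
    rw [hz.dotProduct_succ (by omega), h i hpi (by omega), sub_zero, ih (by omega)]

theorem sum_sq_le (hz : IsStdRep u t z) (w : ι → ℤ) :
    ∑ i ∈ range (t + 1), (z i ⬝ᵥ w) ^ 2 ≤ w ⬝ᵥ w :=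
  sum_sq_dotProduct_le (fun i hi j hj =>
    hz.orthonormal i (Nat.lt_succ_iff.mp (mem_range.mp hi)) j
      (Nat.lt_succ_iff.mp (mem_range.mp hj))) w

theorem extend (hz : IsStdRep u t z) (hv : u t ⬝ᵥ u t = 2) (h0 : ∀ i < t, z i ⬝ᵥ u t = 0)
    (h1 : z t ⬝ᵥ u t = 1) : IsStdRep u (t + 1) (fun i => if i ≤ t then z i else z t - u t) := by
  have horth : ∀ i ≤ t, z i ⬝ᵥ (z t - u t) = 0 := by
    intro i hi
    rw [dotProduct_sub, hz.orthonormal i hi t le_rfl]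
    rcases hi.lt_or_eq with hi | rfl
    · rw [if_neg hi.ne, h0 i hi, sub_zero]
    · rw [if_pos rfl, h1, sub_self]
  have hnorm : (z t - u t) ⬝ᵥ (z t - u t) = 1 := by
    rw [sub_dotProduct, horth t le_rfl, dotProduct_sub, dotProduct_comm, h1, hv]
    norm_num
  constructor
  · intro i hi j hj
    rcases Nat.lt_or_eq_of_le hi with hi | rfl <;> rcases Nat.lt_or_eq_of_le hj with hj | rfl
    · simp only [Nat.le_of_lt_succ hi, Nat.le_of_lt_succ hj, if_true]
      exact hz.orthonormal i (by omega) j (by omega)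
    · simp [Nat.le_of_lt_succ hi, horth i (by omega), hi.ne]
    · simp [Nat.le_of_lt_succ hj, dotProduct_comm _ (z j), horth j (by omega), hj.ne']
    · simp [hnorm]
  · intro i hi
    rcases Nat.lt_or_eq_of_le (Nat.le_of_lt_succ hi) with hi | rfl
    · simp only [hi.le, Nat.succ_le_of_lt hi, if_true, hz.eq_sub i hi]
    · simp

theorem swap (hz : IsStdRep u 1 z) : IsStdRep u 1 (fun i => -z (1 - i)) := by
  constructor
  · intro i hi j hj
    interval_cases i <;> interval_cases j <;> simp [hz.orthonormal]
  · intro i hi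
    obtain rfl : i = 0 := by omega
    rw [hz.eq_sub 0 one_pos]
    abel

end IsStdRep

theorem exists_isStdRep_one {u : ℕ → ι → ℤ} (hu : u 0 ⬝ᵥ u 0 = 2) : ∃ z, IsStdRep u 1 z := by
  obtain ⟨z₀, z₁, h₀, h₁, h₀₁, hu⟩ := exists_sub_of_dotProduct_self_eq_two hu
  refine ⟨fun i => if i = 0 then z₀ else z₁, fun i hi j hj => ?_, fun i hi => ?_⟩
  · interval_cases i <;> interval_cases j <;> simp [h₀, h₁, h₀₁, dotProduct_comm z₁]
  · obtain rfl : i = 0 := by omega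
    simpa using hu

namespace IsAChain

variable {n : ℕ} {u : ℕ → ι → ℤ}

/-- Here `u 0, u 1, u 2` are `z 0 - z 1, z 1 - z 2, -(z 0 + z 1)`, the embedding of `A_3 = D_3`
into `ℤ^3`; `u 3` pairs equally with `z 0` and `z 1`, so its product with `u 2` would be even. -/
theorem false_of_isStdRep_two (hu : IsAChain n u) (hn : 4 ≤ n) {z : ℕ → ι → ℤ}
    (hz : IsStdRep u 2 z) (hz0 : z 0 ⬝ᵥ u 2 = -1) (hz1 : z 1 ⬝ᵥ u 2 = -1) : False := by
  have hu2 : u 2 = -(z 0 + z 1) := by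
    have h : (u 2 + (z 0 + z 1)) ⬝ᵥ (u 2 + (z 0 + z 1)) = 0 := by
      simp only [add_dotProduct, dotProduct_add, dotProduct_comm (u 2), hz0, hz1,
        hu.dot_self 2 (by omega), hz.orthonormal 0 (by norm_num) 1 (by norm_num),
        hz.orthonormal 1 (by norm_num) 0 (by norm_num),
        hz.orthonormal 0 (by norm_num) 0 (by norm_num),
        hz.orthonormal 1 (by norm_num) 1 (by norm_num)]
      norm_num
    exact eq_neg_of_add_eq_zero_left (dotProduct_self_eq_zero.mp h)
  have h01 : z 1 ⬝ᵥ u 3 = z 0 ⬝ᵥ u 3 := by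
    rw [hz.dotProduct_succ (by norm_num), hu.dot_of_add_two_le 0 3 (by norm_num) (by omega),
      sub_zero]
  have h23 : u 2 ⬝ᵥ u 3 = -1 := hu.dot_succ 2 (by omega)
  rw [hu2, neg_dotProduct, add_dotProduct, h01] at h23
  omega

theorem exists_isStdRep_succ (hu : IsAChain n u) (hn : 4 ≤ n) {t : ℕ} (ht : 1 ≤ t)
    (htn : t < n) {z : ℕ → ι → ℤ} (hz : IsStdRep u t z) : ∃ z', IsStdRep u (t + 1) z' := by
  set a := z 0 ⬝ᵥ u t
  have hlow : ∀ i ≤ t - 1, z i ⬝ᵥ u t = a := fun i hi =>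
    hz.dotProduct_eq_of_forall (by omega)
      (fun i _ hi => hu.dot_of_add_two_le i t (by omega) htn) i (Nat.zero_le i) hi
  have htop : z t ⬝ᵥ u t = a + 1 := by
    obtain ⟨s, rfl⟩ : ∃ s, t = s + 1 := ⟨t - 1, by omega⟩
    rw [hz.dotProduct_succ (by omega), hlow s (by omega), hu.dot_succ s htn]
    ring
  have hbessel : t * a ^ 2 + (a + 1) ^ 2 ≤ 2 := by
    have h := hz.sum_sq_le (u t)
    rw [sum_range_succ, sum_congr rfl fun i hi => by rw [hlow i (by simp at hi; omega)],
      sum_const, card_range, htop, hu.dot_self t htn, nsmul_eq_mul] at h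
    exact h
  have ha : -1 ≤ a ∧ a ≤ 0 := ⟨by nlinarith, by nlinarith⟩
  rcases (by omega : a = 0 ∨ a = -1) with ha0 | ha1
  · exact ⟨_, hz.extend (hu.dot_self t htn) (fun i hi => (hlow i (by omega)).trans ha0)
      (by rw [htop, ha0]; rfl)⟩
  have ht2 : (t : ℤ) ≤ 2 := by simpa [ha1] using hbessel
  have hz0 : z 0 ⬝ᵥ u t = -1 := ha1
  -- for `t = 1`, reversing `z 0, z 1` brings us back to the case `a = 0`
  rcases (by omega : t = 1 ∨ t = 2) with rfl | rfl
  · refine ⟨_, hz.swap.extend (hu.dot_self 1 htn) (fun i hi => ?_) ?_⟩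
    · obtain rfl : i = 0 := by omega
      simp [htop, ha1]
    · simp [hz0]
  · exact (hu.false_of_isStdRep_two hn hz hz0 ((hlow 1 le_rfl).trans ha1)).elim

theorem exists_isStdRep (hu : IsAChain n u) (hn : 4 ≤ n) : ∃ z, IsStdRep u n z := by
  suffices ∀ t, 1 ≤ t → t ≤ n → ∃ z, IsStdRep u t z from this n (by omega) le_rfl
  intro t ht
  induction t, ht using Nat.le_induction with
  | base => exact fun _ => exists_isStdRep_one (hu.dot_self 0 (by omega))
  | succ t ht ih =>
    intro htn
    obtain ⟨z, hz⟩ := ih (by omega)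
    exact hu.exists_isStdRep_succ hn ht (by omega) hz

theorem false_of_branch {d : ℕ} (hd : 3 ≤ d) (hu : IsAChain (2 * d - 1) u) {w : ι → ℤ}
    (hw : w ⬝ᵥ w = d - 1) (hwu : ∀ i < 2 * d - 1, u i ⬝ᵥ w = if i + 1 = d then -1 else 0) :
    False := by
  obtain ⟨z, hz⟩ := hu.exists_isStdRep (by omega)
  set a := z 0 ⬝ᵥ w
  have hlow : ∀ i ≤ d - 1, z i ⬝ᵥ w = a := fun i hi =>
    hz.dotProduct_eq_of_forall (by omega)
      (fun i _ hi => by rw [hwu i (by omega), if_neg (by omega)]) i (Nat.zero_le i) hi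
  have hmid : z d ⬝ᵥ w = a + 1 := by
    obtain ⟨s, rfl⟩ : ∃ s, d = s + 1 := ⟨d - 1, by omega⟩
    rw [hz.dotProduct_succ (by omega), hlow s (by omega), hwu s (by omega), if_pos rfl]
    ring
  have hhigh : ∀ i, d ≤ i → i ≤ 2 * d - 1 → z i ⬝ᵥ w = a + 1 := fun i h₁ h₂ =>
    (hz.dotProduct_eq_of_forall le_rfl
      (fun i h₁ h₂ => by rw [hwu i h₂, if_neg (by omega)]) i h₁ h₂).trans hmid
  have hsum : ∑ i ∈ range (2 * d - 1 + 1), (z i ⬝ᵥ w) ^ 2 = d * a ^ 2 + d * (a + 1) ^ 2 := by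
    have hL : ∀ i ∈ range d, (z i ⬝ᵥ w) ^ 2 = a ^ 2 := fun i hi => by
      rw [hlow i (by simp at hi; omega)]
    have hR : ∀ i ∈ range d, (z (d + i) ⬝ᵥ w) ^ 2 = (a + 1) ^ 2 := fun i hi => by
      rw [hhigh (d + i) (by omega) (by simp at hi; omega)]
    rw [show 2 * d - 1 + 1 = d + d by omega, sum_range_add, sum_congr rfl hL, sum_congr rfl hR]
    simp
  have hbessel := hz.sum_sq_le w
  rw [hsum, hw] at hbessel
  have hsq : 1 ≤ a ^ 2 + (a + 1) ^ 2 := by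
    rcases le_or_gt 0 a with h | h <;> nlinarith
  nlinarith

end IsAChain

end IntegerLattice

section Qform

variable {k : ℕ}

theorem Qform_eq_dotProduct (x y : Fin (k + 1) → ℤ) : Qform k x y = 2 * (x 0 * y 0) - x ⬝ᵥ y :=
  rfl

def Qbilin (k : ℕ) : LinearMap.BilinForm ℤ (Fin (k + 1) → ℤ) :=
  LinearMap.mk₂ ℤ (Qform k)
    (fun x y z => by simp only [Qform_eq_dotProduct, Pi.add_apply, add_dotProduct]; ring)
    (fun c x y => by
      simp only [Qform_eq_dotProduct, Pi.smul_apply, smul_dotProduct, smul_eq_mul]; ring)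
    (fun x y z => by simp only [Qform_eq_dotProduct, Pi.add_apply, dotProduct_add]; ring)
    (fun c x y => by
      simp only [Qform_eq_dotProduct, Pi.smul_apply, dotProduct_smul, smul_eq_mul]; ring)

theorem Qbilin_apply (x y : Fin (k + 1) → ℤ) : Qbilin k x y = Qform k x y := rfl

theorem Qform_comm (x y : Fin (k + 1) → ℤ) : Qform k x y = Qform k y x := by
  rw [Qform_eq_dotProduct, Qform_eq_dotProduct, dotProduct_comm, mul_comm (x 0)]

theorem Qform_sub_left (x y z : Fin (k + 1) → ℤ) :
    Qform k (x - y) z = Qform k x z - Qform k y z := by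
  simp only [← Qbilin_apply, map_sub, LinearMap.sub_apply]

theorem Qform_sub_right (x y z : Fin (k + 1) → ℤ) :
    Qform k x (y - z) = Qform k x y - Qform k x z := by
  simp only [← Qbilin_apply, map_sub]

theorem Qform_smul_left (c : ℤ) (x y : Fin (k + 1) → ℤ) :
    Qform k (c • x) y = c * Qform k x y := by
  simp only [← Qbilin_apply, map_smul, LinearMap.smul_apply, smul_eq_mul]

theorem Qform_smul_right (c : ℤ) (x y : Fin (k + 1) → ℤ) :
    Qform k x (c • y) = c * Qform k x y := by
  simp only [← Qbilin_apply, map_smul, smul_eq_mul]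

theorem Qform_sum_left {κ : Type*} (s : Finset κ) (f : κ → Fin (k + 1) → ℤ)
    (y : Fin (k + 1) → ℤ) : Qform k (∑ i ∈ s, f i) y = ∑ i ∈ s, Qform k (f i) y := by
  simp only [← Qbilin_apply, map_sum, LinearMap.sum_apply]

theorem Qform_sum_right {κ : Type*} (s : Finset κ) (x : Fin (k + 1) → ℤ)
    (f : κ → Fin (k + 1) → ℤ) : Qform k x (∑ i ∈ s, f i) = ∑ i ∈ s, Qform k x (f i) := by
  simp only [← Qbilin_apply, map_sum]

theorem basisVec_eq_single {a : ℕ} (ha : a ≤ k) :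
    basisVec k a = Pi.single (⟨a, by omega⟩ : Fin (k + 1)) 1 := by
  ext j
  simp [basisVec, Pi.single_apply, Fin.ext_iff]

theorem Qform_basisVec {a b : ℕ} (ha : a ≤ k) (hb : b ≤ k) :
    Qform k (basisVec k a) (basisVec k b) = if a = b then (if a = 0 then 1 else -1) else 0 := by
  rw [basisVec_eq_single ha, basisVec_eq_single hb, Qform_eq_dotProduct, single_dotProduct]
  simp only [Pi.single_apply, Fin.ext_iff, Fin.val_zero]
  split_ifs <;> omega

theorem Qform_basisVec_sum {b n : ℕ} (hb : b ≤ k) (hn : n ≤ k) :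
    Qform k (basisVec k b) (∑ i ∈ Icc 1 n, basisVec k i) = if 1 ≤ b ∧ b ≤ n then -1 else 0 := by
  rw [Qform_sum_right, sum_congr rfl fun i hi => Qform_basisVec hb (by simp at hi; omega),
    sum_ite_eq]
  simp only [mem_Icc]
  split_ifs <;> omega

theorem Qform_sum_sum {n : ℕ} (hn : n ≤ k) :
    Qform k (∑ i ∈ Icc 1 n, basisVec k i) (∑ i ∈ Icc 1 n, basisVec k i) = -n := by
  rw [Qform_sum_left, sum_congr rfl fun i hi => by
    rw [Qform_basisVec_sum (by simp at hi; omega) hn, if_pos (by simpa using hi)]]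
  simp

end Qform

def chainVec (k a : ℕ) : Fin (k + 1) → ℤ := basisVec k (a + 1) - basisVec k (a + 2)

def branchVec (d k : ℕ) : Fin (k + 1) → ℤ := basisVec k 0 - ∑ i ∈ Icc 1 d, basisVec k i

def symBranchVec (d k : ℕ) : Fin (k + 1) → ℤ :=
  (2 : ℤ) • basisVec k 0 - ∑ i ∈ Icc 1 (2 * d), basisVec k i

section Gram

variable {d k : ℕ}

theorem Qform_basisVec_zero_sum {n : ℕ} (hn : n ≤ k) :
    Qform k (basisVec k 0) (∑ i ∈ Icc 1 n, basisVec k i) = 0 := by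
  simp [Qform_basisVec_sum (Nat.zero_le k) hn]

theorem Qform_chainVec_chainVec {a b : ℕ} (ha : a + 2 ≤ k) (hb : b + 2 ≤ k) :
    Qform k (chainVec k a) (chainVec k b) =
      if a = b then -2 else if a + 1 = b ∨ b + 1 = a then 1 else 0 := by
  simp (disch := omega) only [chainVec, Qform_sub_left, Qform_sub_right, Qform_basisVec]
  split_ifs <;> first | contradiction | omega

theorem Qform_chainVec_branchVec {a : ℕ} (ha : a + 2 ≤ k) (hd : d ≤ k) :
    Qform k (chainVec k a) (branchVec d k) = if a + 1 = d then 1 else 0 := by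
  simp (disch := omega) only [chainVec, branchVec, Qform_sub_left, Qform_sub_right,
    Qform_basisVec, Qform_basisVec_sum]
  split_ifs <;> first | contradiction | omega

theorem Qform_branchVec_self (hd : d ≤ k) :
    Qform k (branchVec d k) (branchVec d k) = 1 - d := by
  simp only [branchVec, Qform_sub_left, Qform_sub_right]
  rw [Qform_comm (∑ i ∈ _, _) (basisVec k 0), Qform_basisVec_zero_sum hd, Qform_sum_sum hd,
    Qform_basisVec (Nat.zero_le k) (Nat.zero_le k)]
  simp

theorem Qform_symBranchVec_self (hd : 2 * d ≤ k) :
    Qform k (symBranchVec d k) (symBranchVec d k) = 4 - 2 * d := by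
  simp only [symBranchVec, Qform_sub_left, Qform_sub_right, Qform_smul_left, Qform_smul_right]
  rw [Qform_comm (∑ i ∈ _, _) (basisVec k 0), Qform_basisVec_zero_sum hd, Qform_sum_sum hd,
    Qform_basisVec (Nat.zero_le k) (Nat.zero_le k)]
  norm_num

end Gram

abbrev Lambda (d k : ℕ) : Submodule ℤ (Fin (k + 1) → ℤ) :=
  Submodule.span ℤ (Set.range (gen d k))

section Membership

variable {d k : ℕ}

theorem chainVec_mem {a : ℕ} (ha : a + 1 < 2 * d) : chainVec k a ∈ Lambda d k := by
  have : gen d k ⟨a, by omega⟩ = chainVec k a := by simp [gen, chainVec, Nat.lt_sub_of_add_lt ha]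
  exact this ▸ Submodule.subset_span ⟨_, rfl⟩

theorem branchVec_mem (hd : 1 ≤ d) : branchVec d k ∈ Lambda d k := by
  have : gen d k ⟨2 * d - 1, by omega⟩ = branchVec d k := by simp [gen, branchVec]
  exact this ▸ Submodule.subset_span ⟨_, rfl⟩

theorem basisVec_sub_basisVec_mem {a b : ℕ} (ha : 1 ≤ a) (hab : a ≤ b) (hb : b ≤ 2 * d) :
    basisVec k a - basisVec k b ∈ Lambda d k := by
  induction b, hab using Nat.le_induction with
  | base => simp
  | succ b hab ih =>
    obtain ⟨c, rfl⟩ : ∃ c, b = c + 1 := ⟨b - 1, by omega⟩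
    have := add_mem (ih (by omega)) (chainVec_mem (k := k) (a := c) (by omega))
    rwa [chainVec, sub_add_sub_cancel] at this

theorem symBranchVec_mem (hd : 1 ≤ d) : symBranchVec d k ∈ Lambda d k := by
  have : symBranchVec d k =
      (2 : ℤ) • branchVec d k + ∑ i ∈ Icc 1 d, (basisVec k i - basisVec k (i + d)) := by
    rw [symBranchVec, branchVec, sum_Icc_one_two_mul, sum_sub_distrib, sum_add_distrib]
    module
  rw [this]
  exact add_mem (Submodule.smul_mem _ _ (branchVec_mem hd)) (Submodule.sum_mem _ fun i hi =>
    basisVec_sub_basisVec_mem (by simp at hi; omega) (by omega) (by simp at hi; omega))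

end Membership

theorem symBranchVec_ne_zero (d k : ℕ) : symBranchVec d k ≠ 0 := by
  have hsum : ∑ i ∈ Icc 1 (2 * d), basisVec k i 0 = 0 :=
    sum_eq_zero fun i hi => if_neg (by simp at hi ⊢; omega)
  intro h
  have h0 := congrFun h 0
  rw [symBranchVec, Pi.sub_apply, Finset.sum_apply, hsum] at h0
  simp [basisVec] at h0

section Cases

variable {d k : ℕ} {ι : Type*} [Fintype ι]

theorem not_injective_of_le_two (hd : 1 ≤ d) (hd2 : d ≤ 2) (hk : 2 * d ≤ k)
    (j : Lambda d k →ₗ[ℤ] ι → ℤ) (hj : ∀ x y : Lambda d k, j x ⬝ᵥ j y = -Qform k x y) :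
    ¬ Function.Injective j := by
  intro hinj
  set x : Lambda d k := ⟨symBranchVec d k, symBranchVec_mem hd⟩
  have hx : j x ⬝ᵥ j x ≤ 0 := by
    rw [hj, Qform_symBranchVec_self hk]
    omega
  have hjx : j x = 0 :=
    dotProduct_self_eq_zero.mp (hx.antisymm (sum_nonneg fun i _ => mul_self_nonneg _))
  exact symBranchVec_ne_zero d k (congrArg Subtype.val (hinj (hjx.trans (map_zero j).symm)))

theorem not_exists_isometry_of_three_le (hd : 3 ≤ d) (hk : 2 * d ≤ k) :
    ¬ ∃ j : Lambda d k → ι → ℤ, ∀ x y, j x ⬝ᵥ j y = -Qform k x y := by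
  rintro ⟨j, hj⟩
  let u : ℕ → ι → ℤ := fun a =>
    if h : a + 1 < 2 * d then j ⟨chainVec k a, chainVec_mem h⟩ else 0
  have hu : ∀ a b, a < 2 * d - 1 → b < 2 * d - 1 →
      u a ⬝ᵥ u b = -Qform k (chainVec k a) (chainVec k b) := fun a b ha hb => by
    simp only [u, dif_pos (show a + 1 < 2 * d by omega), dif_pos (show b + 1 < 2 * d by omega)]
    exact hj _ _
  refine IsAChain.false_of_branch hd (u := u) (w := j ⟨branchVec d k, branchVec_mem (by omega)⟩)
    ⟨fun i hi => ?_, fun i hi => ?_, fun i l hil hl => ?_⟩ ?_ fun i hi => ?_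
  · rw [hu i i hi hi, Qform_chainVec_chainVec (by omega) (by omega), if_pos rfl, neg_neg]
  · rw [hu i (i + 1) (by omega) hi, Qform_chainVec_chainVec (by omega) (by omega),
      if_neg (by omega), if_pos (Or.inl rfl)]
  · rw [hu i l (by omega) hl, Qform_chainVec_chainVec (by omega) (by omega),
      if_neg (by omega), if_neg (by omega), neg_zero]
  · rw [hj, Qform_branchVec_self (by omega), neg_sub]
  · simp only [u, dif_pos (show i + 1 < 2 * d by omega)]
    rw [hj, Qform_chainVec_branchVec (by omega) (by omega)]
    split_ifs <;> rfl

end Cases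

theorem no_embedding_of_Lambda_d_general (d k m : ℕ) (hd : 1 ≤ d) (hk : 2*d ≤ k) :
    ¬ ∃ j : (Submodule.span ℤ (Set.range (gen d k))) →ₗ[ℤ] (Fin m → ℤ),
        Function.Injective j ∧
        ∀ x y : Submodule.span ℤ (Set.range (gen d k)),
          B m (j x) (j y) = Qform k (x : Fin (k+1) → ℤ) (y : Fin (k+1) → ℤ) := by
  rintro ⟨j, hinj, hjQ⟩
  have hj : ∀ x y : Lambda d k, j x ⬝ᵥ j y = -Qform k x y := fun x y => by
    rw [← hjQ, B, dotProduct, neg_neg]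
  rcases le_or_gt d 2 with hd2 | hd3
  · exact not_injective_of_le_two hd hd2 hk j hj hinj
  · exact not_exists_isometry_of_three_le hd3 hk ⟨j, hj⟩

/-- Let `d ≥ 1`, `k ≥ 2d`.  Let `H_d ⊆ ℤ^{1+k}` be the subgroup generated
by `e_1 - e_2, …, e_{2d-1} - e_{2d}` and `h - e_1 - ⋯ - e_d`, with the restriction of `Q`.
Then for every `m ≥ 1` there is no injective `ℤ`-linear map `j : H_d → ℤ^m` with
`B_m(j x, j y) = Q(x, y)` for all `x, y ∈ H_d`. -/
theorem no_embedding_of_Lambda_d (d k m : ℕ) (hd : 1 ≤ d) (hk : 2*d ≤ k) (hm : 1 ≤ m) :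
    ¬ ∃ j : (Submodule.span ℤ (Set.range (gen d k))) →ₗ[ℤ] (Fin m → ℤ),
        Function.Injective j ∧
        ∀ x y : Submodule.span ℤ (Set.range (gen d k)),
          B m (j x) (j y) = Qform k (x : Fin (k+1) → ℤ) (y : Fin (k+1) → ℤ) :=
  no_embedding_of_Lambda_d_general d k m hd hk
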